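/- arXiv:1310.5245 — 3 statements merged into one kernel-verified Lean document; each statement's English description precedes it below -/
import Mathlib

section
/- Let M be an m×n matrix with entries in {0,1} (m,n ≥ 1) with M_{1,1}=1 and M_{m,n}=1. If there exists a semi-sparse staircase of M that ends at position (m,n), then the greedy staircase of M also ends at position (m,n). Consequently, the greedy staircase of M ends at (m,n) if and only if some semi-sparse staircase of M ends at (m,n). -/
/-- One step of a semi-sparse staircase: a (consecutive) right move or a
skipping upward move. -/
def SemiSparseStep (p q : ℕ × ℕ) : Prop :=
  q = (p.1, p.2 + 1) ∨ (q.2 = p.2 ∧ p.1 < q.1)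

/-- A semi-sparse staircase of the m×n Boolean matrix `M` (indices `1..m × 1..n`):
a finite sequence of positions starting at `(1,1)`, consisting of `1`-entries of `M`,
where each move is a right move or a skipping upward move. -/
def IsSemiSparseStaircase (M : ℕ → ℕ → Bool) (m n : ℕ) (P : List (ℕ × ℕ)) : Prop :=
  P.head? = some (1, 1) ∧
  (∀ p ∈ P, M p.1 p.2 = true ∧ 1 ≤ p.1 ∧ p.1 ≤ m ∧ 1 ≤ p.2 ∧ p.2 ≤ n) ∧
  List.Chain' SemiSparseStep P

/-- The greedy next-move relation at position `p`: if a right move is possible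
(`p.2 < n` and `M p.1 (p.2+1) = 1`) then move right; otherwise move up to the
lowest `1`-entry strictly above `p` in the same column (within row range `≤ m`). -/
def GreedyStep (M : ℕ → ℕ → Bool) (m n : ℕ) (p q : ℕ × ℕ) : Prop :=
  (p.2 < n ∧ M p.1 (p.2 + 1) = true ∧ q = (p.1, p.2 + 1)) ∨
  (¬ (p.2 < n ∧ M p.1 (p.2 + 1) = true) ∧
    q.2 = p.2 ∧ p.1 < q.1 ∧ q.1 ≤ m ∧ M q.1 p.2 = true ∧
    ∀ k, p.1 < k → k < q.1 → M k p.2 = false)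

/-- The greedy staircase of `M`: starts at `(1,1)`, follows the greedy rule at each
step, and is maximal (its last position admits no further greedy move). -/
def IsGreedyStaircase (M : ℕ → ℕ → Bool) (m n : ℕ) (P : List (ℕ × ℕ)) : Prop :=
  P.head? = some (1, 1) ∧ List.Chain' (GreedyStep M m n) P ∧
  ∀ p, P.getLast? = some p → ∀ q, ¬ GreedyStep M m n p q

/-!
Say that a position *reaches the corner* if a semi-sparse path through `1`-entries of the grid
leads from it to `(m, n)`. This is invariant under greedy moves: if the greedy walk moves right
while a witnessing path goes up first, the target of the path's first right move lies above the
new position in the same column, so one upward skip joins the path; if the greedy walk goes up,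
it stops at the first `1`-entry of the column, at or below the one the path goes up to.
From any position other than `(m, n)` that reaches the corner some greedy move is possible, so
once `(1, 1)` reaches the corner the maximal greedy staircase can only stop at `(m, n)`.
-/

theorem List.IsChain.forall_mem_of_head?_eq {α : Type*} {r : α → α → Prop} {p : α → Prop}
    {l : List α} {a : α} (h : l.IsChain r) (hl : l.head? = some a)
    (carries : ∀ ⦃x y⦄, r x y → p x → p y) (ha : p a) : ∀ x ∈ l, p x :=
  h.induction p l carries fun hne => (List.head_eq_iff_head?_eq_some hne).mpr hl ▸ ha

def IsGoodPos (M : ℕ → ℕ → Bool) (m n : ℕ) (p : ℕ × ℕ) : Prop :=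
  M p.1 p.2 = true ∧ 1 ≤ p.1 ∧ p.1 ≤ m ∧ 1 ≤ p.2 ∧ p.2 ≤ n

def StaircaseStep (M : ℕ → ℕ → Bool) (m n : ℕ) (p q : ℕ × ℕ) : Prop :=
  SemiSparseStep p q ∧ IsGoodPos M m n q

def ReachesCorner (M : ℕ → ℕ → Bool) (m n : ℕ) (p : ℕ × ℕ) : Prop :=
  Relation.ReflTransGen (StaircaseStep M m n) p (m, n)

section

variable {M : ℕ → ℕ → Bool} {m n : ℕ}

theorem ReachesCorner.right_of_lt_row {q : ℕ × ℕ} (hq : ReachesCorner M m n q) :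
    ∀ i < q.1, q.2 < n → ReachesCorner M m n (i, q.2 + 1) := by
  induction hq using Relation.ReflTransGen.head_induction_on with
  | refl => exact fun _ _ h => absurd h (lt_irrefl n)
  | @head q c hqc hc ih =>
    intro i hi hqn
    obtain ⟨rfl | ⟨hcol, hrow⟩, hgood⟩ := hqc
    · have hstep : StaircaseStep M m n (i, q.2 + 1) (q.1, q.2 + 1) :=
        ⟨Or.inr ⟨rfl, hi⟩, hgood⟩
      exact hc.head hstep
    · simpa only [hcol] using ih i (hi.trans hrow) (hcol ▸ hqn)

theorem GreedyStep.semiSparseStep {p q : ℕ × ℕ} (h : GreedyStep M m n p q) :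
    SemiSparseStep p q := by
  rcases h with ⟨-, -, hq⟩ | ⟨-, hcol, hrow, -⟩
  exacts [Or.inl hq, Or.inr ⟨hcol, hrow⟩]

theorem GreedyStep.isGoodPos {p q : ℕ × ℕ} (h : GreedyStep M m n p q)
    (hp : IsGoodPos M m n p) : IsGoodPos M m n q := by
  obtain ⟨-, hp1, hpm, hp2, hpn⟩ := hp
  rcases h with ⟨hn, hM, rfl⟩ | ⟨-, hcol, hrow, hqm, hM, -⟩
  · exact ⟨hM, hp1, hpm, by omega, hn⟩
  · exact ⟨hcol ▸ hM, by omega, hqm, by omega, by omega⟩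

theorem StaircaseStep.up_of_not_right {p q : ℕ × ℕ} (h : StaircaseStep M m n p q)
    (hR : ¬ (p.2 < n ∧ M p.1 (p.2 + 1) = true)) : q.2 = p.2 ∧ p.1 < q.1 := by
  obtain ⟨rfl | hup, hM, -, -, -, hqn⟩ := h
  · exact absurd ⟨hqn, hM⟩ hR
  · exact hup

theorem GreedyStep.reachesCorner {p q : ℕ × ℕ} (h : GreedyStep M m n p q)
    (hp : ReachesCorner M m n p) : ReachesCorner M m n q := by
  rcases hp.cases_head with rfl | ⟨c, hpc, hc⟩
  · rcases h with ⟨hn, -⟩ | ⟨-, -, hrow, hqm, -⟩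
    exacts [absurd hn (lt_irrefl n), absurd hrow (not_lt.mpr hqm)]
  rcases h with ⟨hpn, -, rfl⟩ | ⟨hR, hcol, hrow, -, -, hmin⟩
  · obtain ⟨rfl | ⟨hcol, hrow⟩, -⟩ := hpc
    · exact hc
    · simpa only [hcol] using ReachesCorner.right_of_lt_row hc p.1 hrow (hcol ▸ hpn)
  · obtain ⟨hcol', hrow'⟩ := hpc.up_of_not_right hR
    have hMc : M c.1 p.2 = true := hcol' ▸ hpc.2.1
    have hle : q.1 ≤ c.1 := not_lt.mp fun hlt => by simp [hmin c.1 hrow' hlt] at hMc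
    rcases hle.lt_or_eq with hlt | heq
    · exact hc.head ⟨Or.inr ⟨by rw [hcol, hcol'], hlt⟩, hpc.2⟩
    · rwa [show q = c from Prod.ext heq (hcol.trans hcol'.symm)]

theorem ReachesCorner.exists_greedyStep {p : ℕ × ℕ} (hp : ReachesCorner M m n p)
    (hne : p ≠ (m, n)) : ∃ q, GreedyStep M m n p q := by
  obtain rfl | ⟨c, hpc, -⟩ := hp.cases_head
  · exact absurd rfl hne
  by_cases hR : p.2 < n ∧ M p.1 (p.2 + 1) = true
  · exact ⟨_, Or.inl ⟨hR.1, hR.2, rfl⟩⟩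
  obtain ⟨hcol, hrow⟩ := hpc.up_of_not_right hR
  have hex : ∃ k, p.1 < k ∧ M k p.2 = true := ⟨c.1, hrow, hcol ▸ hpc.2.1⟩
  classical
  have hk := Nat.find_spec hex
  refine ⟨(Nat.find hex, p.2), Or.inr ⟨hR, rfl, hk.1, ?_, hk.2, fun k hk₁ hk₂ => ?_⟩⟩
  · exact (Nat.find_le ⟨hrow, hcol ▸ hpc.2.1⟩).trans hpc.2.2.2.1
  · simpa [hk₁] using Nat.find_min hex hk₂

theorem IsSemiSparseStaircase.reachesCorner {P : List (ℕ × ℕ)}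
    (hP : IsSemiSparseStaircase M m n P) (hlast : P.getLast? = some (m, n)) :
    ReachesCorner M m n (1, 1) := by
  obtain ⟨hhead, hgood, hchain⟩ := hP
  refine (List.IsChain.iff_mem.mp hchain).backwards_induction (ReachesCorner M m n) P
    (fun x y ⟨_, hy, hxy⟩ hreach => hreach.head ⟨hxy, hgood y hy⟩)
    (fun hne => (List.getLast_eq_iff_getLast?_eq_some hne).mpr hlast ▸ .refl) _
    (List.mem_of_head? hhead)

theorem IsGreedyStaircase.isSemiSparseStaircase {S : List (ℕ × ℕ)}
    (hS : IsGreedyStaircase M m n S) (hm : 1 ≤ m) (hn : 1 ≤ n) (h11 : M 1 1 = true) :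
    IsSemiSparseStaircase M m n S :=
  ⟨hS.1, hS.2.1.forall_mem_of_head?_eq hS.1 (fun _ _ h => h.isGoodPos)
    ⟨h11, le_rfl, hm, le_rfl, hn⟩, hS.2.1.imp fun _ _ h => h.semiSparseStep⟩

theorem IsGreedyStaircase.getLast?_eq_corner {S : List (ℕ × ℕ)}
    (hS : IsGreedyStaircase M m n S) (h11 : ReachesCorner M m n (1, 1)) :
    S.getLast? = some (m, n) := by
  obtain ⟨hhead, hchain, hmax⟩ := hS
  have hS_ne : S ≠ [] := by rintro rfl; simp at hhead
  have hlast := List.getLast?_eq_some_getLast hS_ne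
  have hreach := hchain.forall_mem_of_head?_eq hhead (fun _ _ h => h.reachesCorner) h11 _
    (List.getLast_mem hS_ne)
  by_contra hne
  obtain ⟨q, hq⟩ := hreach.exists_greedyStep (by rintro heq; exact hne (heq ▸ hlast))
  exact hmax _ hlast q hq

end

theorem greedy_staircase_complete_general (M : ℕ → ℕ → Bool) (m n : ℕ)
    (hm : 1 ≤ m) (hn : 1 ≤ n) (h11 : M 1 1 = true)
    (S : List (ℕ × ℕ)) (hS : IsGreedyStaircase M m n S) :
    ((∃ S' : List (ℕ × ℕ), IsSemiSparseStaircase M m n S' ∧ S'.getLast? = some (m, n)) →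
      S.getLast? = some (m, n)) ∧
    (S.getLast? = some (m, n) ↔
      ∃ S' : List (ℕ × ℕ), IsSemiSparseStaircase M m n S' ∧ S'.getLast? = some (m, n)) := by
  have hcomplete : (∃ S' : List (ℕ × ℕ), IsSemiSparseStaircase M m n S' ∧
      S'.getLast? = some (m, n)) → S.getLast? = some (m, n) :=
    fun ⟨_, hS', hlast⟩ => hS.getLast?_eq_corner (hS'.reachesCorner hlast)
  exact ⟨hcomplete, fun hlast => ⟨S, hS.isSemiSparseStaircase hm hn h11, hlast⟩, hcomplete⟩

/-- If some semi-sparse staircase of `M` ends at `(m,n)`, then the greedy staircase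
also ends at `(m,n)`; consequently, the greedy staircase ends at `(m,n)` iff some
semi-sparse staircase does. -/
theorem greedy_staircase_complete (M : ℕ → ℕ → Bool) (m n : ℕ)
    (hm : 1 ≤ m) (hn : 1 ≤ n) (h11 : M 1 1 = true) (hmn : M m n = true)
    (S : List (ℕ × ℕ)) (hS : IsGreedyStaircase M m n S) :
    ((∃ S' : List (ℕ × ℕ), IsSemiSparseStaircase M m n S' ∧ S'.getLast? = some (m, n)) →
      S.getLast? = some (m, n)) ∧
    (S.getLast? = some (m, n) ↔
      ∃ S' : List (ℕ × ℕ), IsSemiSparseStaircase M m n S' ∧ S'.getLast? = some (m, n)) :=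
  greedy_staircase_complete_general M m n hm hn h11 S hS
end

section
/- Let M be an m×n matrix with entries in {0,1} (m,n ≥ 1) with M_{1,1}=1, let S be the greedy staircase of M, and let S' be any semi-sparse staircase of M. Then for every position (k,j) occurring in S', the greedy staircase S contains a position (i,j) in the same column j with i ≤ k. -/
/-!
Walk along the semi-sparse staircase, keeping the invariant that the greedy staircase meets the
current column at a row no higher than the current one. Upward moves keep it trivially. For a
right move from `(k, j)` to `(k, j + 1)`, follow the greedy staircase from its entry `(i, j)` with
`i ≤ k`: while it stays in column `j` at a row `≤ k` it can always move (right at row `k` at the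
latest, otherwise up to the first `1` of column `j`, which is at most `k`), and it only leaves
this region by a right move into column `j + 1` at a row `≤ k`. Being maximal, it does leave.
-/

/-- A maximal chain cannot end inside `P`, so once in `P` it has to escape to `Q`. -/
theorem List.IsChain.exists_mem_of_maximal {α : Type*} {R : α → α → Prop} {P Q : α → Prop}
    {l : List α} (hl : l.IsChain R) (hmax : ∀ p, l.getLast? = some p → ∀ q, ¬ R p q)
    (hmove : ∀ x, P x → ∃ y, R x y) (hstep : ∀ x y, P x → R x y → P y ∨ Q y) :
    ∀ x ∈ l, P x → ∃ y ∈ l, Q y := by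
  refine (hl.imp_of_mem_imp fun _ y _ hy hxy ↦ And.intro hxy hy).backwards_induction _ l
    ?_ ?_
  · rintro x y ⟨hxy, hy⟩ ih hx
    exact (hstep x y hx hxy).elim ih fun hQ ↦ ⟨y, hy, hQ⟩
  · intro hne hP
    obtain ⟨y, hy⟩ := hmove _ hP
    exact absurd hy (hmax _ (List.getLast?_eq_some_getLast hne) y)

section GreedyStep

variable {M : ℕ → ℕ → Bool} {m n i j k : ℕ}

theorem exists_greedyStep (hkm : k ≤ m) (hjn : j < n) (hkj : M k j = true)
    (hkj' : M k (j + 1) = true) (hik : i ≤ k) : ∃ q, GreedyStep M m n (i, j) q := by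
  by_cases hright : M i (j + 1) = true
  · exact ⟨(i, j + 1), Or.inl ⟨hjn, hright, rfl⟩⟩
  have hik : i < k := lt_of_le_of_ne hik (by rintro rfl; exact hright hkj')
  have hup : ∃ k', i < k' ∧ M k' j = true := ⟨k, hik, hkj⟩
  obtain ⟨hik₀, hk₀⟩ := Nat.find_spec hup
  refine ⟨(Nat.find hup, j), Or.inr ⟨fun h ↦ hright h.2, rfl, hik₀,
    (Nat.find_min' hup ⟨hik, hkj⟩).trans hkm, hk₀, fun k' hik' hk' ↦ ?_⟩⟩
  simpa [hik'] using Nat.find_min hup hk'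

theorem GreedyStep.eq_right_or_up_le {q : ℕ × ℕ} (h : GreedyStep M m n (i, j) q)
    (hjn : j < n) (hkj : M k j = true) (hkj' : M k (j + 1) = true) (hik : i ≤ k) :
    q = (i, j + 1) ∨ (q.2 = j ∧ q.1 ≤ k) := by
  rcases h with ⟨-, -, rfl⟩ | ⟨hno, hq, -, -, -, hmin⟩
  · exact Or.inl rfl
  have hik : i < k := lt_of_le_of_ne hik (by rintro rfl; exact hno ⟨hjn, hkj'⟩)
  refine Or.inr ⟨hq, not_lt.mp fun hkq ↦ ?_⟩
  simp [hmin k hik hkq] at hkj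

end GreedyStep

theorem IsGreedyStaircase.exists_mem_next_column {M : ℕ → ℕ → Bool} {m n : ℕ}
    {S : List (ℕ × ℕ)} (hS : IsGreedyStaircase M m n S) {i j k : ℕ} (hkm : k ≤ m) (hjn : j < n)
    (hkj : M k j = true) (hkj' : M k (j + 1) = true) (hik : i ≤ k) (hi : (i, j) ∈ S) :
    ∃ i' ≤ k, (i', j + 1) ∈ S := by
  obtain ⟨q, hq, hQ⟩ := hS.2.1.exists_mem_of_maximal (P := fun p ↦ p.2 = j ∧ p.1 ≤ k)
    (Q := fun p ↦ p.2 = j + 1 ∧ p.1 ≤ k) hS.2.2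
    (by rintro ⟨i, _⟩ ⟨rfl, hik⟩; exact exists_greedyStep hkm hjn hkj hkj' hik)
    (by
      rintro ⟨i, _⟩ q ⟨rfl, hik⟩ hstep
      rcases hstep.eq_right_or_up_le hjn hkj hkj' hik with rfl | hup
      · exact Or.inr ⟨rfl, hik⟩
      · exact Or.inl hup)
    (i, j) hi ⟨rfl, hik⟩
  exact ⟨q.1, hQ.2, hQ.1 ▸ hq⟩

theorem greedy_staircase_below_general (M : ℕ → ℕ → Bool) (m n : ℕ)
    (S : List (ℕ × ℕ)) (hS : IsGreedyStaircase M m n S)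
    (S' : List (ℕ × ℕ)) (hS' : IsSemiSparseStaircase M m n S')
    (k j : ℕ) (hkj : (k, j) ∈ S') :
    ∃ i : ℕ, i ≤ k ∧ (i, j) ∈ S := by
  obtain ⟨hhead', hvalid', hchain'⟩ := hS'
  have hchain : S'.IsChain fun p q ↦ SemiSparseStep p q ∧ p ∈ S' ∧ q ∈ S' :=
    hchain'.imp_of_mem_imp fun _ _ hp hq hpq ↦ ⟨hpq, hp, hq⟩
  refine hchain.induction (fun p ↦ ∃ i ≤ p.1, (i, p.2) ∈ S) S' ?_ ?_ (k, j) hkj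
  · rintro ⟨k, j⟩ q ⟨hstep | ⟨hq, hkq⟩, hp, hq'⟩ ⟨i, hik, hi⟩
    · subst hstep
      obtain ⟨hkj, -, hkm, -⟩ := hvalid' _ hp
      obtain ⟨hkj', -, -, -, hjn⟩ := hvalid' _ hq'
      exact hS.exists_mem_next_column hkm hjn hkj hkj' hik hi
    · exact ⟨i, hik.trans hkq.le, hq ▸ hi⟩
  · intro hne
    have hhead : S'.head hne = (1, 1) := by simpa [List.head?_eq_some_head hne] using hhead'
    rw [hhead]
    exact ⟨1, le_rfl, List.mem_of_mem_head? (by simp [hS.1])⟩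

/-- For every position `(k,j)` of any semi-sparse staircase `S'`, the greedy
staircase `S` contains a position `(i,j)` in the same column with `i ≤ k`. -/
theorem greedy_staircase_below (M : ℕ → ℕ → Bool) (m n : ℕ)
    (hm : 1 ≤ m) (hn : 1 ≤ n) (h11 : M 1 1 = true)
    (S : List (ℕ × ℕ)) (hS : IsGreedyStaircase M m n S)
    (S' : List (ℕ × ℕ)) (hS' : IsSemiSparseStaircase M m n S')
    (k j : ℕ) (hkj : (k, j) ∈ S') :
    ∃ i : ℕ, i ≤ k ∧ (i, j) ∈ S :=
  greedy_staircase_below_general M m n S hS S' hS' k j hkj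
end

section
/- Let X and Y be finite multisets of real numbers and let N = |X| + |Y| (cardinalities counted with multiplicity). Suppose d₁ is an approximate median (in the middle half) of X, i.e., the number of elements x of X with x ≤ d₁ is at least |X|/4 and the number of elements x of X with x ≥ d₁ is at least |X|/4; and suppose d₂ satisfies the analogous two conditions with respect to Y. Then at least one of d₁, d₂ is in the middle three quarters of the combined multiset X + Y, i.e., there is d ∈ {d₁, d₂} such that the number of elements z of X + Y with z ≤ d is at least N/8 and the number of elements z of X + Y with z ≥ d is at least N/8. -/
/-! An approximate median of the larger multiset, say `Y`, already works: on each side of it lie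
at least `|Y|/4 ≥ N/8` elements of `Y`. -/

lemma Multiset.card_div_eight_le_card_filter_add {α : Type*} {X Y : Multiset α} (p : α → Prop)
    [DecidablePred p] (hXY : X.card ≤ Y.card) (hY : (Y.card : ℝ) / 4 ≤ (Y.filter p).card) :
    ((X.card + Y.card : ℕ) : ℝ) / 8 ≤ ((X + Y).filter p).card := by
  have hfilter : (Y.filter p).card ≤ ((X + Y).filter p).card := by
    rw [Multiset.filter_add, Multiset.card_add]
    exact Nat.le_add_left _ _
  have hcard : (X.card : ℝ) ≤ Y.card := by exact_mod_cast hXY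
  have hfilter' : ((Y.filter p).card : ℝ) ≤ ((X + Y).filter p).card := by exact_mod_cast hfilter
  push_cast
  linarith

/-- If `d₁` is an approximate median (in the middle half) of the finite multiset `X`
of reals and `d₂` is an approximate median (in the middle half) of `Y`, then at least
one of `d₁, d₂` lies in the middle three quarters of the combined multiset `X + Y`
(all element counts taken with multiplicity, `N = |X| + |Y|`). -/
theorem approx_median_combine (X Y : Multiset ℝ) (d₁ d₂ : ℝ)
    (hX1 : (X.card : ℝ) / 4 ≤ ((X.filter (fun x => x ≤ d₁)).card : ℝ))
    (hX2 : (X.card : ℝ) / 4 ≤ ((X.filter (fun x => d₁ ≤ x)).card : ℝ))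
    (hY1 : (Y.card : ℝ) / 4 ≤ ((Y.filter (fun x => x ≤ d₂)).card : ℝ))
    (hY2 : (Y.card : ℝ) / 4 ≤ ((Y.filter (fun x => d₂ ≤ x)).card : ℝ)) :
    ∃ d ∈ ({d₁, d₂} : Set ℝ),
      ((X.card + Y.card : ℕ) : ℝ) / 8 ≤ (((X + Y).filter (fun z => z ≤ d)).card : ℝ) ∧
      ((X.card + Y.card : ℕ) : ℝ) / 8 ≤ (((X + Y).filter (fun z => d ≤ z)).card : ℝ) := by
  rcases le_total X.card Y.card with hXY | hYX
  · exact ⟨d₂, Or.inr rfl, Multiset.card_div_eight_le_card_filter_add _ hXY hY1,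
      Multiset.card_div_eight_le_card_filter_add _ hXY hY2⟩
  · rw [add_comm X Y, Nat.add_comm X.card]
    exact ⟨d₁, Or.inl rfl, Multiset.card_div_eight_le_card_filter_add _ hYX hX1,
      Multiset.card_div_eight_le_card_filter_add _ hYX hX2⟩
end
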